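/- Every IWD ball contains all patch permutations of its center: for every image x with N patches, every ε ≥ 0, and all permutations σ, τ of Fin N, the images x ∘ σ and x ∘ τ lie in B_W(x, ε); consequently diam(B_W(x, ε)) ≥ d₁(x ∘ σ, x ∘ τ) for all σ, τ. -/

import Mathlib

open Finset

/-- The ℓ1 norm of a patch. -/
noncomputable def patchL1 {k : ℕ} (u : Fin k → ℝ) : ℝ := ∑ j, |u j|

/-- The internal Wasserstein distance between two images with N patches:
W(x, y) = (1/N) · min over permutations σ of Fin N of Σ_i ‖x i − y (σ i)‖₁. -/
noncomputable def IWD {N k : ℕ} (x y : Fin N → Fin k → ℝ) : ℝ :=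
  (1 / (N : ℝ)) *
    Finset.univ.inf' Finset.univ_nonempty
      (fun σ : Equiv.Perm (Fin N) => ∑ i, patchL1 (x i - y (σ i)))

/-- The image ℓ1 distance d₁(x, y) = Σ_i ‖x i − y i‖₁. -/
noncomputable def imgL1 {N k : ℕ} (x y : Fin N → Fin k → ℝ) : ℝ :=
  ∑ i, patchL1 (x i - y i)

/-- The IWD ball of radius ε around x. -/
def iwdBall {N k : ℕ} (x : Fin N → Fin k → ℝ) (ε : ℝ) : Set (Fin N → Fin k → ℝ) :=
  {y | IWD x y ≤ ε}

/-- The image ℓ1 ball of radius ε around x. -/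
def l1Ball {N k : ℕ} (x : Fin N → Fin k → ℝ) (ε : ℝ) : Set (Fin N → Fin k → ℝ) :=
  {y | imgL1 x y ≤ ε}

/-- The diameter of a set of images with respect to the image ℓ1 distance
(with the real-number convention sSup ∅ = 0). -/
noncomputable def imgDiam {N k : ℕ} (A : Set (Fin N → Fin k → ℝ)) : ℝ :=
  sSup {r : ℝ | ∃ y ∈ A, ∃ z ∈ A, r = imgL1 y z}

/-! The optimal matching of `x` with `x ∘ σ` is `σ⁻¹`, at cost zero, so `x ∘ σ` lies in every
ball around `x`. Since `imgDiam` is a real `sSup`, the diameter bound also needs the ball to be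
bounded for `d₁`: matching `y` with `x` along an optimal permutation gives
`Σ ‖y i‖₁ ≤ Σ ‖x i‖₁ + N ε` on `B_W(x, ε)`. -/

lemma patchL1_nonneg {k : ℕ} (u : Fin k → ℝ) : 0 ≤ patchL1 u :=
  sum_nonneg fun _ _ => abs_nonneg _

lemma patchL1_sub_le {k : ℕ} (u v : Fin k → ℝ) : patchL1 (u - v) ≤ patchL1 u + patchL1 v := by
  simpa only [patchL1, ← sum_add_distrib, Pi.sub_apply] using
    sum_le_sum fun j _ => abs_sub (u j) (v j)

lemma patchL1_le_sub_add {k : ℕ} (u v : Fin k → ℝ) : patchL1 v ≤ patchL1 (u - v) + patchL1 u := by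
  simpa [add_comm] using patchL1_sub_le u (u - v)

lemma imgL1_le_add {N k : ℕ} (y z : Fin N → Fin k → ℝ) :
    imgL1 y z ≤ ∑ i, patchL1 (y i) + ∑ i, patchL1 (z i) := by
  simpa only [imgL1, ← sum_add_distrib] using sum_le_sum fun i _ => patchL1_sub_le (y i) (z i)

lemma exists_perm_mul_IWD_eq {N k : ℕ} (x y : Fin N → Fin k → ℝ) :
    ∃ σ : Equiv.Perm (Fin N), N * IWD x y = ∑ i, patchL1 (x i - y (σ i)) := by
  obtain ⟨σ, -, hσ⟩ := exists_mem_eq_inf' univ_nonempty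
    (fun σ : Equiv.Perm (Fin N) => ∑ i, patchL1 (x i - y (σ i)))
  refine ⟨σ, ?_⟩
  rcases Nat.eq_zero_or_pos N with rfl | hN
  · simp
  · rw [IWD, hσ]
    field_simp

lemma IWD_comp_perm_right {N k : ℕ} (x : Fin N → Fin k → ℝ) (σ : Equiv.Perm (Fin N)) :
    IWD x (x ∘ σ) = 0 := by
  have hmin : univ.inf' univ_nonempty
      (fun π : Equiv.Perm (Fin N) => ∑ i, patchL1 (x i - (x ∘ σ) (π i))) = 0 := by
    refine le_antisymm ((inf'_le _ (mem_univ σ⁻¹)).trans ?_) ?_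
    · simp [patchL1]
    · exact le_inf' _ _ fun π _ => sum_nonneg fun i _ => patchL1_nonneg _
  rw [IWD, hmin, mul_zero]

lemma sum_patchL1_le_add_mul_IWD {N k : ℕ} (x y : Fin N → Fin k → ℝ) :
    ∑ i, patchL1 (y i) ≤ ∑ i, patchL1 (x i) + N * IWD x y := by
  obtain ⟨σ, hσ⟩ := exists_perm_mul_IWD_eq x y
  calc ∑ i, patchL1 (y i) = ∑ i, patchL1 (y (σ i)) := (Equiv.sum_comp σ _).symm
    _ ≤ ∑ i, (patchL1 (x i - y (σ i)) + patchL1 (x i)) :=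
        sum_le_sum fun i _ => patchL1_le_sub_add _ _
    _ = ∑ i, patchL1 (x i) + N * IWD x y := by rw [sum_add_distrib, hσ, add_comm]

lemma sum_patchL1_le_of_mem_iwdBall {N k : ℕ} {x y : Fin N → Fin k → ℝ} {ε : ℝ}
    (hy : y ∈ iwdBall x ε) : ∑ i, patchL1 (y i) ≤ ∑ i, patchL1 (x i) + N * ε :=
  (sum_patchL1_le_add_mul_IWD x y).trans <| by gcongr; exact hy

lemma imgL1_le_imgDiam {N k : ℕ} {A : Set (Fin N → Fin k → ℝ)} {C : ℝ}
    (hA : ∀ y ∈ A, ∑ i, patchL1 (y i) ≤ C) {y z : Fin N → Fin k → ℝ} (hy : y ∈ A) (hz : z ∈ A) :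
    imgL1 y z ≤ imgDiam A := by
  refine le_csSup ⟨C + C, ?_⟩ ⟨y, hy, z, hz, rfl⟩
  rintro r ⟨y', hy', z', hz', rfl⟩
  exact (imgL1_le_add y' z').trans (add_le_add (hA y' hy') (hA z' hz'))

lemma comp_perm_mem_iwdBall {N k : ℕ} (x : Fin N → Fin k → ℝ) {ε : ℝ} (hε : 0 ≤ ε)
    (σ : Equiv.Perm (Fin N)) : x ∘ σ ∈ iwdBall x ε := by
  simpa [iwdBall, IWD_comp_perm_right] using hε

theorem perms_mem_iwdBall_general (N k : ℕ)
    (x : Fin N → Fin k → ℝ) (ε : ℝ) (hε : 0 ≤ ε) (σ τ : Equiv.Perm (Fin N)) :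
    (x ∘ σ) ∈ iwdBall x ε ∧ (x ∘ τ) ∈ iwdBall x ε ∧
      imgL1 (x ∘ σ) (x ∘ τ) ≤ imgDiam (iwdBall x ε) := by
  have hσ := comp_perm_mem_iwdBall x hε σ
  have hτ := comp_perm_mem_iwdBall x hε τ
  exact ⟨hσ, hτ, imgL1_le_imgDiam (fun y hy => sum_patchL1_le_of_mem_iwdBall hy) hσ hτ⟩

/-- every IWD ball contains all patch permutations of its center, and
consequently its diameter dominates the ℓ1 distance between any two such permutations. -/
theorem perms_mem_iwdBall (N k : ℕ) (hN : 1 ≤ N) (hk : 1 ≤ k)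
    (x : Fin N → Fin k → ℝ) (ε : ℝ) (hε : 0 ≤ ε) (σ τ : Equiv.Perm (Fin N)) :
    (x ∘ σ) ∈ iwdBall x ε ∧ (x ∘ τ) ∈ iwdBall x ε ∧
      imgL1 (x ∘ σ) (x ∘ τ) ≤ imgDiam (iwdBall x ε) :=
  perms_mem_iwdBall_general N k x ε hε σ τ
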